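/- For every nonnegative integer ℓ, Σ_{t=1}^{n} S_n(t)·t^ℓ = 2·n^ℓ + O(n^{ℓ-1}) as n → ∞, where S_n(t) := Σ_{k=1}^{t} A(n,k)/n!; i.e., there is a constant C depending only on ℓ with |Σ_{t=1}^{n} S_n(t)·t^ℓ − 2·n^ℓ| ≤ C·n^{ℓ-1} for all n ≥ 1. -/

import Mathlib

open Finset Filter

/-- Sequence A000255: A(0)=A(1)=1, A(n)=n·A(n-1)+(n-1)·A(n-2). -/
def A : ℕ → ℕ
  | 0 => 1
  | 1 => 1
  | n + 2 => (n + 2) * A (n + 1) + (n + 1) * A n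

/-- A(n,k) := C(n-1,k-1)·A(k-1). -/
def Ank (n k : ℕ) : ℕ := Nat.choose (n - 1) (k - 1) * A (k - 1)

/-!
Write `B s = ∑ₘ C(s,m) A(m)` and `E s = ∑ₘ C(s,m) A(m+1)`. Pascal's rule gives
`B (s+1) = B s + E s`, while the recurrence `A(m+1) = A m + m (A m + A (m-1))` and the absorption
`m C(s+1,m) = (s+1) C(s,m-1)` give `E s = (s+1) B s`; hence `B s = (s+1)!`. Thus `k ↦ A(n,k)/n!`
is a probability distribution on `[1, n]`, and absorbing the factors `n - k` into the binomial
coefficient shows that `n - k` has mean `(n-1)/n` and `(n-k)(n-k+1)` has mean at most `3`.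

Swapping the two sums, the quantity to estimate is the average over `k` of
`∑_{t=k}^n t^ℓ = (n-k+1) n^ℓ + O(ℓ (n-k)(n-k+1) n^{ℓ-1})`,
and `n - k + 1` has mean `2 - 1/n`.
-/

open Nat

lemma A_succ (m : ℕ) : A (m + 1) = A m + m * (A m + A (m - 1)) := by
  cases m with
  | zero => rfl
  | succ m => simp only [A, add_tsub_cancel_right]; ring

lemma sum_range_choose_succ_mul (f : ℕ → ℕ) (s : ℕ) :
    ∑ m ∈ range (s + 2), (s + 1).choose m * f m =
      ∑ m ∈ range (s + 1), s.choose m * f m +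
        ∑ m ∈ range (s + 1), s.choose m * f (m + 1) := by
  simpa using sum_choose_succ_mul (fun i _ => f i) s

lemma sum_range_choose_succ_mul_mul_self (f : ℕ → ℕ) (s : ℕ) :
    ∑ m ∈ range (s + 2), (s + 1).choose m * (m * f m) =
      (s + 1) * ∑ m ∈ range (s + 1), s.choose m * f (m + 1) := by
  rw [sum_range_succ', mul_sum]
  simp only [zero_mul, mul_zero, add_zero]
  refine sum_congr rfl fun m _ => ?_
  rw [← mul_assoc, ← mul_assoc, add_one_mul_choose_eq]

lemma sum_range_choose_mul_A_succ (s : ℕ) :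
    ∑ m ∈ range (s + 1), s.choose m * A (m + 1) =
      (s + 1) * ∑ m ∈ range (s + 1), s.choose m * A m := by
  induction s with
  | zero => rfl
  | succ s ih =>
    have pascal := sum_range_choose_succ_mul A s
    have hA : ∀ m, (s + 1).choose m * A (m + 1) =
        (s + 1).choose m * A m + (s + 1).choose m * (m * (A m + A (m - 1))) := fun m => by
      rw [A_succ, mul_add]
    rw [sum_congr rfl fun m _ => hA m, sum_add_distrib, sum_range_choose_succ_mul_mul_self]
    simp only [add_tsub_cancel_right, mul_add, sum_add_distrib]
    rw [ih, show s + 1 + 1 = s + 2 from rfl, pascal, ih]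
    ring

lemma sum_range_choose_mul_A (s : ℕ) :
    ∑ m ∈ range (s + 1), s.choose m * A m = (s + 1)! := by
  induction s with
  | zero => rfl
  | succ s ih =>
    rw [sum_range_choose_succ_mul, sum_range_choose_mul_A_succ, ih, factorial_succ (s + 1)]
    ring

lemma sum_range_choose_mul_A_of_lt {r N : ℕ} (h : r < N) :
    ∑ m ∈ range N, r.choose m * A m = (r + 1)! := by
  rw [← sum_range_choose_mul_A r]
  refine (sum_subset (range_subset_range.2 h) fun m _ hm => ?_).symm
  rw [choose_eq_zero_of_lt (by simpa using hm), zero_mul]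

lemma sub_mul_choose (s i : ℕ) : (s - i) * s.choose i = s * (s - 1).choose i := by
  cases s with
  | zero => simp
  | succ r => rw [add_tsub_cancel_right, mul_comm, ← choose_mul_succ_eq, mul_comm]

lemma sum_Icc_mul_Ank (s : ℕ) (g : ℕ → ℕ) :
    ∑ k ∈ Icc 1 (s + 1), g (s + 1 - k) * Ank (s + 1) k =
      ∑ i ∈ range (s + 1), g (s - i) * (s.choose i * A i) := by
  rw [← Ico_add_one_right_eq_Icc, sum_Ico_eq_sum_range, add_tsub_cancel_right]
  simp [Ank, add_comm 1]

lemma sum_Ank {n : ℕ} (hn : 1 ≤ n) : ∑ k ∈ Icc 1 n, Ank n k = n ! := by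
  obtain ⟨s, rfl⟩ := Nat.exists_eq_add_of_le' hn
  simpa [sum_range_choose_mul_A] using sum_Icc_mul_Ank s 1

lemma sum_sub_mul_Ank {n : ℕ} (hn : 1 ≤ n) :
    ∑ k ∈ Icc 1 n, (n - k) * Ank n k = (n - 1) * (n - 1)! := by
  obtain ⟨s, rfl⟩ := Nat.exists_eq_add_of_le' hn
  rw [sum_Icc_mul_Ank s (fun j => j), add_tsub_cancel_right]
  have h (i : ℕ) : (s - i) * (s.choose i * A i) = s * ((s - 1).choose i * A i) := by
    rw [← mul_assoc, sub_mul_choose, mul_assoc]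
  rw [sum_congr rfl fun i _ => h i, ← mul_sum]
  cases s with
  | zero => simp
  | succ r => rw [add_tsub_cancel_right, sum_range_choose_mul_A_of_lt (by omega)]

lemma sum_sub_mul_sub_mul_Ank {n : ℕ} (hn : 1 ≤ n) :
    ∑ k ∈ Icc 1 n, (n - k) * (n - k - 1) * Ank n k = (n - 2) * (n - 1)! := by
  obtain ⟨s, rfl⟩ := Nat.exists_eq_add_of_le' hn
  rw [sum_Icc_mul_Ank s (fun j => j * (j - 1)), add_tsub_cancel_right]
  have h (i : ℕ) : (s - i) * (s - i - 1) * (s.choose i * A i) =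
      s * (s - 1) * ((s - 2).choose i * A i) := by
    rw [mul_comm (s - i), ← mul_assoc, mul_assoc _ (s - i), sub_mul_choose, tsub_right_comm,
      mul_left_comm, sub_mul_choose, tsub_tsub]
    ring
  rw [sum_congr rfl fun i _ => h i, ← mul_sum]
  rcases s with _ | _ | r
  · simp
  · simp
  · rw [show r + 1 + 1 - 2 = r by omega, sum_range_choose_mul_A_of_lt (by omega),
      show r + 1 + 1 + 1 - 2 = r + 1 by omega, add_tsub_cancel_right, factorial_succ (r + 1)]
    ring

lemma sum_Icc_sum_Icc_mul_comm {R : Type*} [NonUnitalNonAssocSemiring R] (a b : ℕ → R)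
    (m n : ℕ) :
    ∑ t ∈ Icc m n, (∑ k ∈ Icc m t, a k) * b t =
      ∑ k ∈ Icc m n, a k * ∑ t ∈ Icc k n, b t := by
  simp only [sum_mul, mul_sum, ← Ico_add_one_right_eq_Icc]
  exact (sum_Ico_Ico_comm m (n + 1) fun k t => a k * b t).symm

lemma natCast_mul_pow_pred {K : Type*} [DivisionRing K] (a : K) (ℓ : ℕ) :
    ℓ * a ^ (ℓ - 1) = ℓ * a ^ ((ℓ : ℤ) - 1) := by
  cases ℓ with
  | zero => simp
  | succ m => simp [← zpow_natCast]

lemma abs_pow_sub_pow_le_of_le {K : Type*} [Field K] [LinearOrder K] [IsStrictOrderedRing K]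
    {a b : K} (hb : 0 ≤ b) (hba : b ≤ a) (ℓ : ℕ) :
    |a ^ ℓ - b ^ ℓ| ≤ (a - b) * ℓ * a ^ ((ℓ : ℤ) - 1) := by
  have h := abs_pow_sub_pow_le a b ℓ
  rwa [abs_of_nonneg (sub_nonneg.2 hba), abs_of_nonneg (hb.trans hba), abs_of_nonneg hb,
    max_eq_left hba, mul_assoc, natCast_mul_pow_pred, ← mul_assoc] at h

lemma abs_sum_Icc_pow_sub_le {k n : ℕ} (hkn : k ≤ n) (ℓ : ℕ) :
    |∑ t ∈ Icc k n, (t : ℝ) ^ ℓ - ((n - k + 1 : ℕ) : ℝ) * (n : ℝ) ^ ℓ| ≤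
      (((n - k) * (n - k + 1) : ℕ) : ℝ) * ℓ * (n : ℝ) ^ ((ℓ : ℤ) - 1) := by
  have hcard : #(Icc k n) = n - k + 1 := by rw [Nat.card_Icc]; omega
  have hterm : ∀ t ∈ Icc k n, |(t : ℝ) ^ ℓ - (n : ℝ) ^ ℓ| ≤
      ((n - k : ℕ) : ℝ) * ℓ * (n : ℝ) ^ ((ℓ : ℤ) - 1) := by
    intro t ht
    obtain ⟨hkt, htn⟩ := mem_Icc.1 ht
    rw [abs_sub_comm]
    refine (abs_pow_sub_pow_le_of_le t.cast_nonneg (by exact_mod_cast htn) ℓ).trans ?_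
    gcongr
    rw [Nat.cast_sub hkn]
    gcongr
  calc |∑ t ∈ Icc k n, (t : ℝ) ^ ℓ - ((n - k + 1 : ℕ) : ℝ) * (n : ℝ) ^ ℓ|
      = |∑ t ∈ Icc k n, ((t : ℝ) ^ ℓ - (n : ℝ) ^ ℓ)| := by
        rw [sum_sub_distrib, sum_const, hcard, nsmul_eq_mul]
    _ ≤ ∑ t ∈ Icc k n, ((n - k : ℕ) : ℝ) * ℓ * (n : ℝ) ^ ((ℓ : ℤ) - 1) :=
        (abs_sum_le_sum_abs _ _).trans (sum_le_sum hterm)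
    _ = _ := by rw [sum_const, hcard, nsmul_eq_mul]; push_cast; ring

lemma sum_Ank_div_factorial_mul (n : ℕ) (f : ℕ → ℕ) :
    ∑ k ∈ Icc 1 n, (Ank n k : ℝ) / n ! * f k =
      ((∑ k ∈ Icc 1 n, f k * Ank n k : ℕ) : ℝ) / n ! := by
  push_cast
  rw [sum_div]
  exact sum_congr rfl fun k _ => by ring

lemma sum_Ank_div_factorial_mul_sub_add_one {n : ℕ} (hn : 1 ≤ n) :
    ∑ k ∈ Icc 1 n, (Ank n k : ℝ) / n ! * ((n - k + 1 : ℕ) : ℝ) = 2 - 1 / n := by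
  have h : ∑ k ∈ Icc 1 n, (n - k + 1) * Ank n k = (n - 1) * (n - 1)! + n ! := by
    simp only [add_mul, one_mul, sum_add_distrib, sum_sub_mul_Ank hn, sum_Ank hn]
  rw [sum_Ank_div_factorial_mul, h, ← mul_factorial_pred (by omega : n ≠ 0)]
  have hn0 : (n : ℝ) ≠ 0 := by positivity
  push_cast [Nat.cast_sub hn]
  field_simp
  ring

lemma sum_Ank_div_factorial_mul_le {n : ℕ} (hn : 1 ≤ n) :
    ∑ k ∈ Icc 1 n, (Ank n k : ℝ) / n ! * (((n - k) * (n - k + 1) : ℕ) : ℝ) ≤ 3 := by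
  have hsplit (j : ℕ) : j * (j + 1) = j * (j - 1) + 2 * j := by
    rcases j with _ | j
    · rfl
    · rw [add_tsub_cancel_right]; ring
  have h : ∑ k ∈ Icc 1 n, (n - k) * (n - k + 1) * Ank n k =
      (n - 2) * (n - 1)! + 2 * ((n - 1) * (n - 1)!) := by
    simp only [hsplit, add_mul, sum_add_distrib, mul_assoc 2, ← mul_sum]
    rw [sum_sub_mul_sub_mul_Ank hn, sum_sub_mul_Ank hn]
  have hfac : (n - 1) * (n - 1)! ≤ n ! := by
    rw [← mul_factorial_pred (by omega : n ≠ 0)]; gcongr; omega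
  have hfac' : (n - 2) * (n - 1)! ≤ n ! := le_trans (by gcongr; omega) hfac
  rw [sum_Ank_div_factorial_mul, h, div_le_iff₀ (by positivity)]
  exact_mod_cast (by omega : (n - 2) * (n - 1)! + 2 * ((n - 1) * (n - 1)!) ≤ 3 * n !)

lemma sum_Ank_div_factorial_mul_sum_Icc_pow_sub {n : ℕ} (hn : 1 ≤ n) (ℓ : ℕ) :
    ∑ k ∈ Icc 1 n, (Ank n k : ℝ) / n ! * ∑ t ∈ Icc k n, (t : ℝ) ^ ℓ -
        2 * (n : ℝ) ^ ℓ =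
      ∑ k ∈ Icc 1 n, (Ank n k : ℝ) / n ! *
          (∑ t ∈ Icc k n, (t : ℝ) ^ ℓ - ((n - k + 1 : ℕ) : ℝ) * (n : ℝ) ^ ℓ) -
        (n : ℝ) ^ ((ℓ : ℤ) - 1) := by
  have hn0 : (n : ℝ) ≠ 0 := by positivity
  simp only [mul_sub, sum_sub_distrib, ← mul_assoc, ← sum_mul,
    sum_Ank_div_factorial_mul_sub_add_one hn, zpow_sub_one₀ hn0, zpow_natCast]
  field_simp
  ring

theorem stmt19 (ℓ : ℕ) :
    ∃ C : ℝ, ∀ n : ℕ, 1 ≤ n →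
      |∑ t ∈ Finset.Icc 1 n,
          (∑ k ∈ Finset.Icc 1 t, (Ank n k : ℝ) / (Nat.factorial n)) * (t : ℝ) ^ ℓ
        - 2 * (n : ℝ) ^ ℓ| ≤ C * (n : ℝ) ^ ((ℓ : ℤ) - 1) := by
  refine ⟨3 * ℓ + 1, fun n hn => ?_⟩
  set w : ℕ → ℝ := fun k => (Ank n k : ℝ) / (n ! : ℝ)
  set Q : ℝ := (n : ℝ) ^ ((ℓ : ℤ) - 1)
  have hw (k : ℕ) : 0 ≤ w k := by positivity
  have hQ : 0 ≤ Q := by positivity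
  rw [sum_Icc_sum_Icc_mul_comm, sum_Ank_div_factorial_mul_sum_Icc_pow_sub hn]
  set T : ℕ → ℝ := fun k => ∑ t ∈ Icc k n, (t : ℝ) ^ ℓ
  calc |∑ k ∈ Icc 1 n, w k * (T k - ((n - k + 1 : ℕ) : ℝ) * (n : ℝ) ^ ℓ) - Q|
      ≤ ∑ k ∈ Icc 1 n, w k * |T k - ((n - k + 1 : ℕ) : ℝ) * (n : ℝ) ^ ℓ| + Q := by
        refine (abs_sub _ _).trans (add_le_add ?_ (abs_of_nonneg hQ).le)
        refine (abs_sum_le_sum_abs _ _).trans_eq (sum_congr rfl fun k _ => ?_)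
        rw [abs_mul, abs_of_nonneg (hw k)]
    _ ≤ ∑ k ∈ Icc 1 n, w k * ((((n - k) * (n - k + 1) : ℕ) : ℝ) * ℓ * Q) + Q := by
        gcongr with k hk
        exact abs_sum_Icc_pow_sub_le (mem_Icc.1 hk).2 ℓ
    _ = (∑ k ∈ Icc 1 n, w k * (((n - k) * (n - k + 1) : ℕ) : ℝ)) * (ℓ * Q) + Q := by
        simp only [sum_mul, mul_assoc]
    _ ≤ 3 * (ℓ * Q) + Q := by gcongr; exact sum_Ank_div_factorial_mul_le hn
    _ = (3 * ℓ + 1) * Q := by ring
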